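/- Fix an integer t ≥ 1. The cones C_m, m ≥ 1, are pairwise disjoint: for all integers m, m' ≥ 1 with m ≠ m', we have C_m ∩ C_{m'} = ∅. -/

import Mathlib

/-- The generator `v_i ∈ ℝ^{t+1}`: coordinates `0,…,(i-1) mod t` equal `1`, the remaining
coordinates among `0,…,t-1` equal `0`, and the last coordinate equals `((i-1) div t)·t`. -/
noncomputable def geneV (t : ℕ) (i : ℕ) : Fin (t + 1) → ℝ := fun l =>
  if (l : ℕ) = t then (((i - 1) / t) * t : ℕ)
  else if (l : ℕ) ≤ (i - 1) % t then 1 else 0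

/-- The half-open simplicial cone `C_m`, generated by `v_m, …, v_{m+t}` with the facet
opposite the first generator open. -/
noncomputable def coneC (t : ℕ) (m : ℕ) : Set (Fin (t + 1) → ℝ) :=
  { x | ∃ α : Fin (t + 1) → ℝ, 0 < α 0 ∧ (∀ i, 0 ≤ α i) ∧
      x = ∑ i : Fin (t + 1), α i • geneV t (m + (i : ℕ)) }

/-- The normal vector `u_l = -((l div t)+1)·t·e₀ + t·e_{l mod t} + e_t`. -/
noncomputable def normalU (t : ℕ) (l : ℕ) : Fin (t + 1) → ℝ := fun j =>
  (if (j : ℕ) = 0 then -(((l / t + 1) * t : ℕ) : ℝ) else 0)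
    + (if (j : ℕ) = l % t then (t : ℝ) else 0)
    + (if (j : ℕ) = t then 1 else 0)

/-- Standard inner product on `ℝ^{t+1}`. -/
noncomputable def sprod {n : ℕ} (u x : Fin n → ℝ) : ℝ := ∑ j, u j * x j

/-!
For every `l` the functional `u_l = normalU t l` satisfies `⟪u_l, v_i⟫ = t * ⌊(i - 1 - l) / t⌋`.
Hence `u_m` is negative on `v_m`, vanishes on `v_{m+1}, …, v_{m+t}` and is nonnegative on every
`v_i` with `i > m`. So `C_m` lies in the open half-space `⟪u_m, ·⟫ < 0`, while `C_{m'}` for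
`m' > m` lies in the closed half-space `⟪u_m, ·⟫ ≥ 0`.
-/

theorem Int.sub_ediv_eq_ediv_sub_ediv (n l t : ℤ) (ht : 0 < t) :
    (n - l) / t = n / t - l / t - if l % t ≤ n % t then 0 else 1 := by
  rw [Int.ediv_eq_iff_of_pos ht]
  have hn := Int.ediv_mul_add_emod n t
  have hl := Int.ediv_mul_add_emod l t
  have := Int.emod_nonneg n ht.ne'
  have := Int.emod_nonneg l ht.ne'
  have := Int.emod_lt_of_pos n ht
  have := Int.emod_lt_of_pos l ht
  split_ifs <;> constructor <;> linarith

theorem Fin.sum_ite_val_eq_mul {R : Type*} [NonUnitalNonAssocSemiring R] {n c : ℕ} (hc : c < n)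
    (s : R) (x : Fin n → R) :
    ∑ j : Fin n, (if (j : ℕ) = c then s else 0) * x j = s * x ⟨c, hc⟩ := by
  rw [Finset.sum_eq_single ⟨c, hc⟩] <;> simp +contextual [Fin.ext_iff]

theorem sprod_sum_smul {n N : ℕ} (u : Fin n → ℝ) (α : Fin N → ℝ) (w : Fin N → Fin n → ℝ) :
    sprod u (∑ i, α i • w i) = ∑ i, α i * sprod u (w i) := by
  simp only [sprod, Finset.sum_apply, Pi.smul_apply, smul_eq_mul, Finset.mul_sum]
  rw [Finset.sum_comm]
  exact Finset.sum_congr rfl fun i _ => Finset.sum_congr rfl fun j _ => by ring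

section
variable {t : ℕ}

theorem sprod_normalU_geneV_eq (ht : 0 < t) (l i : ℕ) :
    sprod (normalU t l) (geneV t i) =
      t * (((i - 1) / t : ℕ) + (if l % t ≤ (i - 1) % t then 1 else 0) - (l / t + 1 : ℕ)) := by
  have hmod : l % t < t := Nat.mod_lt _ ht
  simp only [sprod, normalU, add_mul, Finset.sum_add_distrib]
  rw [Fin.sum_ite_val_eq_mul (by omega : 0 < t + 1),
    Fin.sum_ite_val_eq_mul (by omega : l % t < t + 1), Fin.sum_ite_val_eq_mul (by omega : t < t + 1)]
  simp only [geneV, if_neg ht.ne, if_neg hmod.ne, if_pos (Nat.zero_le _), if_true]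
  split_ifs <;> push_cast <;> ring

theorem sprod_normalU_geneV (ht : 0 < t) (l i : ℕ) (hi : 1 ≤ i) :
    sprod (normalU t l) (geneV t i) = t * (((i - 1 - l : ℤ) / t : ℤ) : ℝ) := by
  rw [sprod_normalU_geneV_eq ht, Int.sub_ediv_eq_ediv_sub_ediv _ _ _ (by exact_mod_cast ht)]
  have hcast : (i : ℤ) - 1 = ((i - 1 : ℕ) : ℤ) := by omega
  rw [hcast]
  congr 1
  have hcond : ((l : ℤ) % t ≤ ((i - 1 : ℕ) : ℤ) % t) ↔ l % t ≤ (i - 1) % t := by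
    norm_cast
  simp only [hcond, ← Int.natCast_div]
  split_ifs <;> simp only [Int.cast_sub, Int.cast_natCast, Int.cast_one, Int.cast_zero,
    Nat.cast_add, Nat.cast_one] <;> ring

theorem sprod_normalU_geneV_self (ht : 0 < t) (m : ℕ) (hm : 1 ≤ m) :
    sprod (normalU t m) (geneV t m) = -t := by
  rw [sprod_normalU_geneV ht m m hm, sub_sub_cancel_left, Int.neg_one_ediv,
    Int.sign_natCast_of_ne_zero ht.ne']
  simp

theorem sprod_normalU_geneV_nonneg (ht : 0 < t) {l i : ℕ} (hli : l < i) :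
    0 ≤ sprod (normalU t l) (geneV t i) := by
  rw [sprod_normalU_geneV ht l i (by omega)]
  have : 0 ≤ ((i - 1 - l : ℤ) / t : ℤ) := Int.ediv_nonneg (by omega) (by omega)
  positivity

theorem sprod_normalU_geneV_eq_zero (ht : 0 < t) {l i : ℕ} (hli : l < i) (hil : i ≤ l + t) :
    sprod (normalU t l) (geneV t i) = 0 := by
  rw [sprod_normalU_geneV ht l i (by omega), Int.ediv_eq_zero_of_lt (by omega) (by omega)]
  simp

theorem sprod_normalU_neg_of_mem_coneC (ht : 0 < t) {m : ℕ} (hm : 1 ≤ m)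
    {x : Fin (t + 1) → ℝ} (hx : x ∈ coneC t m) : sprod (normalU t m) x < 0 := by
  obtain ⟨α, hα0, -, rfl⟩ := hx
  have hfacet : ∀ i : Fin t, sprod (normalU t m) (geneV t (m + (i.succ : ℕ))) = 0 := fun i =>
    sprod_normalU_geneV_eq_zero ht (by simp) (by simp [Fin.val_succ])
  rw [sprod_sum_smul, Fin.sum_univ_succ]
  simp only [hfacet, Fin.val_zero, add_zero, sprod_normalU_geneV_self ht m hm, mul_zero,
    Finset.sum_const_zero]
  exact mul_neg_of_pos_of_neg hα0 (neg_neg_of_pos (Nat.cast_pos.2 ht))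

theorem sprod_normalU_nonneg_of_mem_coneC (ht : 0 < t) {m m' : ℕ} (hmm' : m < m')
    {x : Fin (t + 1) → ℝ} (hx : x ∈ coneC t m') : 0 ≤ sprod (normalU t m) x := by
  obtain ⟨α, -, hα, rfl⟩ := hx
  rw [sprod_sum_smul]
  exact Finset.sum_nonneg fun i _ =>
    mul_nonneg (hα i) (sprod_normalU_geneV_nonneg ht (by omega))

theorem disjoint_coneC_of_lt (ht : 0 < t) {m m' : ℕ} (hm : 1 ≤ m) (hmm' : m < m') :
    Disjoint (coneC t m) (coneC t m') :=
  Set.disjoint_left.2 fun _ hx hx' =>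
    (sprod_normalU_neg_of_mem_coneC ht hm hx).not_ge (sprod_normalU_nonneg_of_mem_coneC ht hmm' hx')

end

/-- The cones `C_m`, `m ≥ 1`, are pairwise disjoint. -/
theorem cones_pairwise_disjoint (t : ℕ) (ht : 1 ≤ t) (m m' : ℕ)
    (hm : 1 ≤ m) (hm' : 1 ≤ m') (hne : m ≠ m') :
    coneC t m ∩ coneC t m' = ∅ := by
  rw [← Set.disjoint_iff_inter_eq_empty]
  rcases hne.lt_or_gt with h | h
  · exact disjoint_coneC_of_lt ht hm h
  · exact (disjoint_coneC_of_lt ht hm' h).symm
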